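/- arXiv:1004.1654 — 7 statements merged into one kernel-verified Lean document; each statement's English description precedes it below -/
import Mathlib

section
/- For every positive integer k, reals c, δ > 0, and ε with 0 < ε ≤ 1/3, there exists a positive real Z₀ = Z₀(k, c, δ, ε) such that: if S is a δ-separated set of points contained in an interval I of length L ≥ Z₀ with |S| ≥ cL, then S contains k points that form an ε-approximate arithmetic progression of k terms. -/
/-!
Density increment. Fix `M ≥ k / ε`. If every window of length `2b` inside an interval of length
`M b` meets `S`, a point of `S` in each window `[u + p D, u + p D + 2 ε D]`, `D = b / ε`, gives an
`ε`-approximate progression. Otherwise the empty window contains one of the `M` blocks of length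
`b`, so one of the other `M - 1` blocks carries a `1 / (M - 1)` share of the points. After `m`
steps from `[t, t + L]` the count has dropped by `(M - 1) ^ m` but the length by `M ^ m`; as
`((M - 1) / M) ^ m → 0`, this contradicts the bound `ℓ / δ + 1` on the number of points of a
`δ`-separated set in an interval of length `ℓ` once `L` is large.
-/

/-- A set of reals is `δ`-separated if distinct points are at distance at least `δ`. -/
def Separated (δ : ℝ) (S : Finset ℝ) : Prop :=
  ∀ x ∈ S, ∀ y ∈ S, x ≠ y → δ ≤ |x - y|

/-- `b 0, …, b (k-1)` is an ε-approximate arithmetic progression of `k` terms. -/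
def IsApproxAP (ε : ℝ) (k : ℕ) (b : Fin k → ℝ) : Prop :=
  ∃ a D : ℝ, 0 < D ∧ ∀ p : Fin k, |b p - (a + p * D)| ≤ ε * D

open Finset

noncomputable def countIn (S : Finset ℝ) (u ℓ : ℝ) : ℕ :=
  #(S.filter (· ∈ Set.Icc u (u + ℓ)))

/-- Every window `[x, x + w]` inside `[u, u + ℓ]` meets `S`. -/
def HitsWindows (S : Finset ℝ) (w u ℓ : ℝ) : Prop :=
  ∀ x, u ≤ x → x + w ≤ u + ℓ → ∃ s ∈ S, s ∈ Set.Icc x (x + w)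

lemma Separated.mono {δ : ℝ} {S T : Finset ℝ} (hS : Separated δ S) (hTS : T ⊆ S) :
    Separated δ T :=
  fun x hx y hy => hS x (hTS hx) y (hTS hy)

lemma Separated.card_le {δ u ℓ : ℝ} {T : Finset ℝ} (hT : Separated δ T) (hδ : 0 < δ)
    (hℓ : 0 ≤ ℓ) (hTI : ∀ x ∈ T, x ∈ Set.Icc u (u + ℓ)) :
    (#T : ℝ) ≤ ℓ / δ + 1 := by
  set f : ℝ → ℕ := fun x => ⌊(x - u) / δ⌋₊
  have hmaps : Set.MapsTo f T (range (⌊ℓ / δ⌋₊ + 1)) := by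
    intro x hx
    obtain ⟨hux, hxu⟩ := hTI x hx
    simp only [coe_range, Set.mem_Iio, Nat.lt_succ_iff]
    exact Nat.floor_le_floor (by gcongr; linarith)
  have hmono : StrictMonoOn f T := by
    intro x hx y hy hxy
    have hgap : δ ≤ y - x := by
      simpa [abs_sub_comm x, abs_of_pos (sub_pos.2 hxy)] using hT x hx y hy hxy.ne
    have hx0 : 0 ≤ (x - u) / δ := div_nonneg (by linarith [(hTI x hx).1]) hδ.le
    calc f x < ⌊(x - u) / δ + 1⌋₊ := by rw [Nat.floor_add_one hx0]; exact Nat.lt_succ_self _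
      _ ≤ f y := Nat.floor_le_floor (by rw [div_add_one hδ.ne']; gcongr; linarith)
  calc (#T : ℝ) ≤ #(range (⌊ℓ / δ⌋₊ + 1)) := by
        exact_mod_cast card_le_card_of_injOn f hmaps hmono.injOn
    _ ≤ ℓ / δ + 1 := by
        rw [card_range]; push_cast; gcongr; exact Nat.floor_le (by positivity)

lemma Separated.countIn_le {δ : ℝ} {S : Finset ℝ} (hS : Separated δ S) (hδ : 0 < δ)
    (u : ℝ) {ℓ : ℝ} (hℓ : 0 ≤ ℓ) : (countIn S u ℓ : ℝ) ≤ ℓ / δ + 1 :=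
  (hS.mono (filter_subset _ _)).card_le hδ hℓ fun _ hx => (mem_filter.1 hx).2

lemma countIn_add_le (S : Finset ℝ) (u a b : ℝ) :
    countIn S u (a + b) ≤ countIn S u a + countIn S (u + a) b := by
  refine (card_le_card fun y hy => ?_).trans (card_union_le _ _)
  simp only [mem_union, mem_filter, Set.mem_Icc] at hy ⊢
  rcases le_or_gt y (u + a) with h | h
  · exact Or.inl ⟨hy.1, hy.2.1, h⟩
  · exact Or.inr ⟨hy.1, h.le, by linarith⟩

lemma countIn_mul_le_sum (S : Finset ℝ) (u b : ℝ) {M : ℕ} (hM : 0 < M) :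
    countIn S u (M * b) ≤ ∑ j ∈ range M, countIn S (u + j * b) b := by
  induction M, hM using Nat.le_induction with
  | base => simp
  | succ M _ ih =>
    rw [sum_range_succ, Nat.cast_succ, add_one_mul]
    exact (countIn_add_le S u _ b).trans (by gcongr)

lemma exists_countIn_eq_zero_of_gap {S : Finset ℝ} {u x b : ℝ} {M : ℕ} (hb : 0 < b)
    (hux : u ≤ x) (hxM : x + 2 * b ≤ u + M * b) (hgap : ∀ s ∈ S, s ∉ Set.Icc x (x + 2 * b)) :
    ∃ j < M, countIn S (u + j * b) b = 0 := by
  -- the first block starting inside the empty window `[x, x + 2b]` lies in it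
  set j := ⌈(x - u) / b⌉₊
  have hj : x ≤ u + j * b := by
    have := Nat.le_ceil ((x - u) / b)
    rw [div_le_iff₀ hb] at this
    linarith
  have hj' : u + j * b < x + b := by
    have := Nat.ceil_lt_add_one (div_nonneg (sub_nonneg.2 hux) hb.le)
    rw [← sub_lt_iff_lt_add, lt_div_iff₀ hb] at this
    linarith
  refine ⟨j, ?_, card_eq_zero.2 (filter_eq_empty_iff.2 fun s hs hsI => hgap s hs ?_)⟩
  · have : (j : ℝ) * b < M * b := by linarith
    exact_mod_cast lt_of_mul_lt_mul_right this hb.le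
  · exact ⟨hj.trans hsI.1, by linarith [hsI.2]⟩

lemma Finset.exists_le_mul_of_le_sum {ι : Type*} [DecidableEq ι] {s : Finset ι} {f : ι → ℕ}
    {N : ℕ} {i₀ : ι} (hi₀ : i₀ ∈ s) (hf : f i₀ = 0) (hN : N ≤ ∑ i ∈ s, f i) :
    ∃ i ∈ s, N ≤ (#s - 1) * f i := by
  rw [← sum_erase s hf] at hN
  rcases (s.erase i₀).eq_empty_or_nonempty with hempty | hne
  · exact ⟨i₀, hi₀, by simp_all⟩
  · obtain ⟨i, hi, hle⟩ := exists_le_of_sum_le hne (f := fun _ => N)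
      (g := fun i => (#s - 1) * f i) (by
        rw [sum_const, card_erase_of_mem hi₀, smul_eq_mul, ← mul_sum]
        gcongr)
    exact ⟨i, mem_of_mem_erase hi, hle⟩

lemma exists_countIn_le_of_not_hitsWindows {S : Finset ℝ} {u b : ℝ} {M : ℕ} (hb : 0 < b)
    (h : ¬HitsWindows S (2 * b) u (M * b)) :
    ∃ j < M, (countIn S u (M * b) : ℝ) ≤ ((M : ℝ) - 1) * countIn S (u + j * b) b := by
  simp only [HitsWindows, not_forall, not_exists, not_and] at h
  obtain ⟨x, hux, hxM, hgap⟩ := h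
  obtain ⟨j₀, hj₀, hzero⟩ := exists_countIn_eq_zero_of_gap hb hux hxM hgap
  obtain ⟨j, hj, hle⟩ := exists_le_mul_of_le_sum (mem_range.2 hj₀) hzero
    (countIn_mul_le_sum S u b (j₀.zero_le.trans_lt hj₀))
  rw [card_range] at hle
  refine ⟨j, mem_range.1 hj, ?_⟩
  rw [← Nat.cast_pred (j₀.zero_le.trans_lt hj₀)]
  exact_mod_cast hle

lemma Separated.exists_hitsWindows {δ : ℝ} {S : Finset ℝ} (hS : Separated δ S) (hδ : 0 < δ)
    {M : ℕ} (hM : 0 < M) (i : ℕ) {u b : ℝ} (hb : 0 < b)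
    (hcount : ((M : ℝ) - 1) ^ i * (b / δ + 1) < countIn S u (M ^ i * b)) :
    ∃ v b', 0 < b' ∧ HitsWindows S (2 * b') v (M * b') := by
  induction i generalizing u with
  | zero =>
    rw [pow_zero, one_mul, pow_zero, one_mul] at hcount
    exact absurd (hS.countIn_le hδ u hb.le) hcount.not_ge
  | succ i ih =>
    by_cases hhit : HitsWindows S (2 * (M ^ i * b)) u (M * (M ^ i * b))
    · exact ⟨u, _, by positivity, hhit⟩
    obtain ⟨j, -, hj⟩ := exists_countIn_le_of_not_hitsWindows (by positivity) hhit
    have hM1 : (0 : ℝ) ≤ M - 1 := sub_nonneg.2 (by exact_mod_cast hM)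
    rw [← mul_assoc, ← pow_succ'] at hj
    rw [pow_succ', mul_assoc] at hcount
    exact ih (lt_of_mul_lt_mul_left (hcount.trans_le hj) hM1)

lemma exists_pow_mul_div_add_one_lt {M c δ : ℝ} (hM : 1 < M) (hc : 0 < c) (hδ : 0 < δ) :
    ∃ m : ℕ, ∃ Z₀ > 0, ∀ L ≥ Z₀, (M - 1) ^ m * (L / M ^ m / δ + 1) < c * L := by
  have hM0 : 0 < M := zero_lt_one.trans hM
  obtain ⟨m, hm⟩ := exists_pow_lt_of_lt_one (by positivity : 0 < c * δ / 2)
    ((div_lt_one hM0).2 (sub_lt_self M one_pos))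
  have hM1 : 0 < M - 1 := sub_pos.2 hM
  refine ⟨m, 2 * (M - 1) ^ m / c, by positivity, fun L hZL => ?_⟩
  have hL : 0 < L := lt_of_lt_of_le (by positivity) hZL
  have hdecay : (M - 1) ^ m * (L / M ^ m / δ) < c * L / 2 := by
    calc (M - 1) ^ m * (L / M ^ m / δ) = ((M - 1) / M) ^ m * (L / δ) := by
          rw [div_pow]; field_simp
      _ < c * δ / 2 * (L / δ) := by gcongr
      _ = c * L / 2 := by field_simp
  have hconst : (M - 1) ^ m ≤ c * L / 2 := by
    rw [ge_iff_le, div_le_iff₀ hc] at hZL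
    linarith
  linarith

lemma exists_isApproxAP_of_hitsWindows {S : Finset ℝ} {k : ℕ} {ε u ℓ D : ℝ} (hD : 0 < D)
    (hε : ε < 1 / 2) (hkD : k * D ≤ ℓ) (hhit : HitsWindows S (2 * ε * D) u ℓ) :
    ∃ b : Fin k → ℝ, Function.Injective b ∧ (∀ p, b p ∈ S) ∧ IsApproxAP ε k b := by
  have hwindow : ∀ p : Fin k, ∃ s ∈ S, s ∈ Set.Icc (u + p * D) (u + p * D + 2 * ε * D) := by
    intro p
    have hp : (p : ℝ) + 1 ≤ k := by exact_mod_cast p.isLt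
    exact hhit _ (le_add_of_nonneg_right (by positivity)) (by nlinarith)
  choose b hbS hb using hwindow
  have hmono : StrictMono b := by
    intro p q hpq
    have hpq' : (p : ℝ) + 1 ≤ q := by exact_mod_cast hpq
    nlinarith [(hb p).2, (hb q).1]
  refine ⟨b, hmono.injective, hbS, u + ε * D, D, hD, fun p => abs_le.2 ⟨?_, ?_⟩⟩ <;>
    linarith [(hb p).1, (hb p).2]

theorem approx_ap_of_dense_separated_general (k : ℕ) (c δ ε : ℝ)
    (hc : 0 < c) (hδ : 0 < δ) (hε : 0 < ε) (hε' : ε ≤ 1 / 3) :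
    ∃ Z₀ : ℝ, 0 < Z₀ ∧
      ∀ L : ℝ, Z₀ ≤ L → ∀ t : ℝ, ∀ S : Finset ℝ,
        (∀ x ∈ S, x ∈ Set.Icc t (t + L)) → Separated δ S → c * L ≤ S.card →
        ∃ b : Fin k → ℝ, Function.Injective b ∧ (∀ p, b p ∈ S) ∧ IsApproxAP ε k b := by
  set M : ℕ := ⌈k / ε⌉₊ + 2
  have hkM : (k : ℝ) ≤ M * ε := by
    rw [← div_le_iff₀ hε]
    exact (Nat.le_ceil _).trans (by simp [M])
  have hM : (1 : ℝ) < M := by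
    have : (0 : ℝ) ≤ ⌈k / ε⌉₊ := Nat.cast_nonneg _
    push_cast [M]
    linarith
  obtain ⟨m, Z₀, hZ₀, hbound⟩ := exists_pow_mul_div_add_one_lt hM hc hδ
  refine ⟨Z₀, hZ₀, fun L hL t S hSI hS hcard => ?_⟩
  have hMm : (0 : ℝ) < M ^ m := pow_pos (one_pos.trans hM) m
  have hcount : countIn S t (M ^ m * (L / M ^ m)) = #S := by
    rw [mul_div_cancel₀ _ hMm.ne', countIn, filter_true_of_mem hSI]
  obtain ⟨v, b, hb, hhit⟩ := hS.exists_hitsWindows hδ (M := M) (by omega) m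
    (div_pos (hZ₀.trans_le hL) hMm) (by rw [hcount]; linarith [hbound L hL])
  refine exists_isApproxAP_of_hitsWindows (u := v) (ℓ := M * b) (div_pos hb hε) (by linarith)
    ?_ ?_
  · rw [mul_div_assoc', div_le_iff₀ hε]
    nlinarith
  · rwa [mul_assoc, mul_div_cancel₀ _ hε.ne']

theorem approx_ap_of_dense_separated (k : ℕ) (hk : 0 < k) (c δ ε : ℝ)
    (hc : 0 < c) (hδ : 0 < δ) (hε : 0 < ε) (hε' : ε ≤ 1 / 3) :
    ∃ Z₀ : ℝ, 0 < Z₀ ∧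
      ∀ L : ℝ, Z₀ ≤ L → ∀ t : ℝ, ∀ S : Finset ℝ,
        (∀ x ∈ S, x ∈ Set.Icc t (t + L)) → Separated δ S → c * L ≤ S.card →
        ∃ b : Fin k → ℝ, Function.Injective b ∧ (∀ p, b p ∈ S) ∧ IsApproxAP ε k b :=
  approx_ap_of_dense_separated_general k c δ ε hc hδ hε hε'
end

section
/- For every positive integer n and every ε with 0 ≤ ε < 1/3, there exists a set of n points in [0,1] that contains no ε-approximate arithmetic progression of 3 terms. In particular, the set S = {ξ^i : i = 0, …, n−1} with ξ = 1/3 − ε works. -/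
/-!
For `0 < ξ < 1` and `ξ^i < ξ^j < ξ^k` we have `j ≥ k + 1`, so the lower gap `ξ^j - ξ^i` is less than
`ξ^j ≤ ξ · ξ^k`, while the upper gap `ξ^k - ξ^j` is at least `(1 - ξ) ξ^k`: the upper gap exceeds
`(1 - ξ) / ξ` times the lower one. In an ε-approximate progression that ratio is at most
`(1 + 2ε) / (1 - 2ε)`, and `(1 - ξ)(1 - 2ε) ≥ ξ (1 + 2ε)` exactly when `2 (ξ + ε) ≤ 1`, which holds
for `ξ = 1/3 - ε`.
-/

/-- `q₁ < q₂ < q₃` form an ε-approximate 3-term arithmetic progression. -/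
def IsApproxAP3 (ε q₁ q₂ q₃ : ℝ) : Prop :=
  q₁ < q₂ ∧ q₂ < q₃ ∧ ∃ a r : ℝ, 0 < r ∧
    |q₁ - (a - r)| ≤ ε * r ∧ |q₂ - a| ≤ ε * r ∧ |q₃ - (a + r)| ≤ ε * r

namespace IsApproxAP3

variable {ε q₁ q₂ q₃ : ℝ}

theorem nonneg (h : IsApproxAP3 ε q₁ q₂ q₃) : 0 ≤ ε := by
  obtain ⟨-, -, a, r, hr, -, h₂, -⟩ := h
  exact nonneg_of_mul_nonneg_left ((abs_nonneg _).trans h₂) hr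

theorem gap_mul_le (h : IsApproxAP3 ε q₁ q₂ q₃) :
    (1 - 2 * ε) * (q₃ - q₂) ≤ (1 + 2 * ε) * (q₂ - q₁) := by
  have hε := h.nonneg
  obtain ⟨h₁₂, h₂₃, a, r, hr, h₁, h₂, h₃⟩ := h
  rw [abs_le] at h₁ h₂ h₃
  have lower : (1 - 2 * ε) * r ≤ q₂ - q₁ := by linarith
  have upper : q₃ - q₂ ≤ (1 + 2 * ε) * r := by linarith
  rcases le_or_gt 0 (1 - 2 * ε) with hpos | hneg
  · calc (1 - 2 * ε) * (q₃ - q₂) ≤ (1 - 2 * ε) * ((1 + 2 * ε) * r) := by gcongr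
      _ = (1 + 2 * ε) * ((1 - 2 * ε) * r) := by ring
      _ ≤ (1 + 2 * ε) * (q₂ - q₁) := by gcongr
  · nlinarith

end IsApproxAP3

theorem pow_gap_mul_lt {ξ : ℝ} (hξ₀ : 0 < ξ) (hξ₁ : ξ < 1) (i : ℕ) {j k : ℕ}
    (hjk : ξ ^ j < ξ ^ k) :
    (1 - ξ) * (ξ ^ j - ξ ^ i) < ξ * (ξ ^ k - ξ ^ j) := by
  have hkj : k + 1 ≤ j := (pow_lt_pow_iff_right_of_lt_one₀ hξ₀ hξ₁).1 hjk
  have hj : ξ ^ j ≤ ξ * ξ ^ k := by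
    rw [← pow_succ']
    exact pow_le_pow_of_le_one hξ₀.le hξ₁.le hkj
  have hi : 0 < ξ ^ i := pow_pos hξ₀ i
  calc (1 - ξ) * (ξ ^ j - ξ ^ i) < (1 - ξ) * (ξ * ξ ^ k) := by gcongr; linarith
    _ = ξ * (ξ ^ k - ξ * ξ ^ k) := by ring
    _ ≤ ξ * (ξ ^ k - ξ ^ j) := by gcongr

theorem not_isApproxAP3_pow {ξ ε : ℝ} (hξ₀ : 0 < ξ) (hξε : 2 * (ξ + ε) ≤ 1) (i j k : ℕ) :
    ¬ IsApproxAP3 ε (ξ ^ i) (ξ ^ j) (ξ ^ k) := by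
  intro h
  have hε := h.nonneg
  have hξ₁ : ξ < 1 := by linarith
  have hAP := h.gap_mul_le
  have hgeom := pow_gap_mul_lt hξ₀ hξ₁ i h.2.1
  have hupper : 0 < ξ ^ k - ξ ^ j := sub_pos.2 h.2.1
  nlinarith

theorem no_approx_ap3_geometric_general (n : ℕ) (ε : ℝ) (hε : 0 ≤ ε) (hε' : ε < 1 / 3) :
    ∃ S : Finset ℝ, (↑S ⊆ Set.Icc (0 : ℝ) 1) ∧ S.card = n ∧
      (∀ q₁ ∈ S, ∀ q₂ ∈ S, ∀ q₃ ∈ S, ¬ IsApproxAP3 ε q₁ q₂ q₃) ∧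
      S = (Finset.range n).image (fun i => (1 / 3 - ε) ^ i) := by
  set ξ : ℝ := 1 / 3 - ε with hξ
  have hξ₀ : 0 < ξ := by linarith
  have hξ₁ : ξ < 1 := by linarith
  refine ⟨(Finset.range n).image (ξ ^ ·), ?_, ?_, ?_, rfl⟩
  · rw [Finset.coe_image]
    rintro _ ⟨i, -, rfl⟩
    exact ⟨pow_nonneg hξ₀.le i, pow_le_one₀ hξ₀.le hξ₁.le⟩
  · rw [Finset.card_image_of_injective _ (pow_right_strictAnti₀ hξ₀ hξ₁).injective,
      Finset.card_range]
  · simp only [Finset.mem_image]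
    rintro _ ⟨i, -, rfl⟩ _ ⟨j, -, rfl⟩ _ ⟨k, -, rfl⟩
    exact not_isApproxAP3_pow (ε := ε) hξ₀ (by linarith) i j k

theorem no_approx_ap3_geometric (n : ℕ) (hn : 0 < n) (ε : ℝ) (hε : 0 ≤ ε) (hε' : ε < 1 / 3) :
    ∃ S : Finset ℝ, (↑S ⊆ Set.Icc (0 : ℝ) 1) ∧ S.card = n ∧
      (∀ q₁ ∈ S, ∀ q₂ ∈ S, ∀ q₃ ∈ S, ¬ IsApproxAP3 ε q₁ q₂ q₃) ∧
      S = (Finset.range n).image (fun i => (1 / 3 - ε) ^ i) :=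
  no_approx_ap3_geometric_general n ε hε hε'
end

section
/- For every positive integer n, the set S = {1/8^i : i = 0, …, n−1} ⊆ [0,1] contains no ε-approximate arithmetic progression of 3 terms for any 0 ≤ ε ≤ 1/4. -/
namespace IsApproxAP3

variable {ε q₁ q₂ q₃ : ℝ}

theorem sub_le_three_mul_sub (h : IsApproxAP3 ε q₁ q₂ q₃) (hε : ε ≤ 1 / 4) :
    q₃ - q₂ ≤ 3 * (q₂ - q₁) := by
  obtain ⟨-, -, a, r, hr, h₁, h₂, h₃⟩ := h
  rw [abs_le] at h₁ h₂ h₃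
  have hεr : ε * r ≤ r / 4 := by nlinarith
  linarith [h₁.1, h₂.2, h₃.2]

theorem lt_four_mul (h : IsApproxAP3 ε q₁ q₂ q₃) (hε : ε ≤ 1 / 4) (hq₁ : 0 < q₁) :
    q₃ < 4 * q₂ := by
  linarith [h.sub_le_three_mul_sub hε]

end IsApproxAP3

theorem mul_pow_le_of_pow_lt {M₀ : Type*} [MonoidWithZero M₀] [LinearOrder M₀]
    [PosMulStrictMono M₀] {c : M₀} (hc₀ : 0 < c) (hc₁ : c < 1) {i j : ℕ}
    (h : c ^ j < c ^ i) : c ^ j ≤ c * c ^ i := by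
  have hij : i + 1 ≤ j := (pow_lt_pow_iff_right_of_lt_one₀ hc₀ hc₁).mp h
  calc c ^ j ≤ c ^ (i + 1) := pow_le_pow_of_le_one hc₀.le hc₁.le hij
    _ = c * c ^ i := pow_succ' c i

theorem no_approx_ap3_powers_of_eighth_general (n : ℕ) :
    ∀ S : Finset ℝ, S = (Finset.range n).image (fun i => (1 / 8 : ℝ) ^ i) →
      (↑S ⊆ Set.Icc (0 : ℝ) 1) ∧
      ∀ ε : ℝ, 0 ≤ ε → ε ≤ 1 / 4 →
        ∀ q₁ ∈ S, ∀ q₂ ∈ S, ∀ q₃ ∈ S, ¬ IsApproxAP3 ε q₁ q₂ q₃ := by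
  rintro S rfl
  refine ⟨?_, fun ε _ hε q₁ h₁ q₂ h₂ q₃ h₃ hap => ?_⟩
  · intro x hx
    obtain ⟨i, -, rfl⟩ := Finset.mem_image.mp hx
    exact ⟨by positivity, pow_le_one₀ (by norm_num) (by norm_num)⟩
  · simp only [Finset.mem_image] at h₁ h₂ h₃
    obtain ⟨i₁, -, rfl⟩ := h₁
    obtain ⟨i₂, -, rfl⟩ := h₂
    obtain ⟨i₃, -, rfl⟩ := h₃
    have hgap : (1 / 8 : ℝ) ^ i₂ ≤ 1 / 8 * (1 / 8) ^ i₃ :=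
      mul_pow_le_of_pow_lt (by norm_num) (by norm_num) hap.2.1
    have hlt := hap.lt_four_mul hε (by positivity)
    have hq₂ : (0 : ℝ) < (1 / 8) ^ i₂ := by positivity
    linarith

theorem no_approx_ap3_powers_of_eighth (n : ℕ) (hn : 0 < n) :
    ∀ S : Finset ℝ, S = (Finset.range n).image (fun i => (1 / 8 : ℝ) ^ i) →
      (↑S ⊆ Set.Icc (0 : ℝ) 1) ∧
      ∀ ε : ℝ, 0 ≤ ε → ε ≤ 1 / 4 →
        ∀ q₁ ∈ S, ∀ q₂ ∈ S, ∀ q₃ ∈ S, ¬ IsApproxAP3 ε q₁ q₂ q₃ :=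
  no_approx_ap3_powers_of_eighth_general n
end

section
/- For every positive integers d and k, reals c, δ > 0, and ε with 0 < ε ≤ 1/3, there exists a positive real Z₀ = Z₀(d, k, c, δ, ε) such that: every δ-separated set S contained in the cube [0, L]^d with |S| ≥ cL^d and L ≥ Z₀ contains a subset forming an ε-approximate k-grid in ℝ^d. -/
/-- A set of points in `ℝ^d` is `δ`-separated if distinct points are at
Euclidean distance at least `δ`. -/
def SeparatedEuc (d : ℕ) (δ : ℝ) (S : Finset (EuclideanSpace ℝ (Fin d))) : Prop :=
  ∀ x ∈ S, ∀ y ∈ S, x ≠ y → δ ≤ dist x y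

/-- `q` is an ε-approximate `k`-grid: each `q i` lies within `ε x` of the
exact grid point `a + x • i` for some `a` and scale `x > 0`. -/
def IsApproxGrid (d k : ℕ) (ε : ℝ) (q : (Fin d → Fin k) → EuclideanSpace ℝ (Fin d)) : Prop :=
  ∃ a : EuclideanSpace ℝ (Fin d), ∃ x : ℝ, 0 < x ∧
    ∀ i : Fin d → Fin k,
      dist (q i) (WithLp.toLp 2 (fun j => a j + x * ((i j : ℕ) : ℝ)) : EuclideanSpace ℝ (Fin d)) ≤ ε * x

/-!
Density increment. Cut a cube of side `M` containing `S` into `(k t)^d` cells of side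
`s = M / (k t)`, where `t ≥ √d / (2ε)`. If some cell holds at least `1 + 1/(2kᵈ)` times its
fair share of `S`, pass to that cell. Otherwise fewer than `tᵈ/2` cells are empty. Writing a
cell index coordinatewise as `v + t i` with `v ∈ [0, t)ᵈ` and `i ∈ [0, k)ᵈ`, some offset `v`
then has all `kᵈ` cells `v + t i` occupied, and one point from each of them lies within
`√d s / 2 ≤ ε t s` of the grid of step `t s`. Increments cannot go on forever, since a
`δ`-separated set in a cube of side `M ≥ δ` has at most `((√d + 1) M / δ)ᵈ` points.
-/

open Finset Function

theorem EuclideanSpace.dist_le_sqrt_card_mul {ι : Type*} [Fintype ι]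
    {x y : EuclideanSpace ℝ ι} {r : ℝ} (hr : 0 ≤ r) (h : ∀ j, |x j - y j| ≤ r) :
    dist x y ≤ √(Fintype.card ι) * r := by
  rw [EuclideanSpace.dist_eq, ← Real.sqrt_sq hr, ← Real.sqrt_mul (Nat.cast_nonneg _)]
  refine Real.sqrt_le_sqrt ?_
  calc ∑ j, dist (x j) (y j) ^ 2 ≤ ∑ _j : ι, r ^ 2 :=
        sum_le_sum fun j _ => pow_le_pow_left₀ (abs_nonneg _) (h j) 2
    _ = Fintype.card ι * r ^ 2 := by simp

theorem Finset.exists_forall_mem_of_card_compl_lt {α β γ : Type*} [Fintype β] [Fintype γ]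
    [DecidableEq γ] {f : α × β → γ} (hf : Injective f) {T : Finset γ}
    (hT : #Tᶜ < Fintype.card β) : ∃ b, ∀ a, f (a, b) ∈ T := by
  by_contra! hbad
  choose a ha using hbad
  have hinj : Injective fun b => f (a b, b) := fun b b' h => (Prod.ext_iff.1 (hf h)).2
  refine hT.not_ge ?_
  rw [← card_univ]
  exact card_le_card_of_injOn _ (fun b _ => mem_compl.2 (ha b)) hinj.injOn

theorem Finset.card_compl_image_lt {α ι : Type*} [Fintype ι] [DecidableEq ι] {S : Finset α}
    (hS : S.Nonempty) (g : α → ι) {η : ℝ} (hη : 0 ≤ η)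
    (hsparse : ∀ i, (Fintype.card ι : ℝ) * #{x ∈ S | g x = i} < (1 + η) * #S) :
    (#(S.image g)ᶜ : ℝ) < η * Fintype.card ι := by
  have hsum : (Fintype.card ι : ℝ) * #S < #(S.image g) * (1 + η) * #S := calc
    (Fintype.card ι : ℝ) * #S =
        ∑ i ∈ S.image g, (Fintype.card ι : ℝ) * #{x ∈ S | g x = i} := by
      rw [card_eq_sum_card_image g S, Nat.cast_sum, mul_sum]
    _ < ∑ i ∈ S.image g, (1 + η) * #S :=
      sum_lt_sum_of_nonempty (hS.image g) fun i _ => hsparse i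
    _ = #(S.image g) * (1 + η) * #S := by rw [sum_const, nsmul_eq_mul, mul_assoc]
  have hcard : (Fintype.card ι : ℝ) < #(S.image g) * (1 + η) :=
    lt_of_mul_lt_mul_right hsum (Nat.cast_nonneg _)
  have himage : (#(S.image g) : ℝ) ≤ Fintype.card ι := by exact_mod_cast card_le_univ _
  rw [card_compl, Nat.cast_sub (card_le_univ _)]
  nlinarith [mul_le_mul_of_nonneg_left himage hη]

section Cubes

variable {d : ℕ}

def cube (a : EuclideanSpace ℝ (Fin d)) (M : ℝ) : Set (EuclideanSpace ℝ (Fin d)) :=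
  {p | ∀ j, p j ∈ Set.Icc (a j) (a j + M)}

/-- The cell containing `p` when `cube a (n * s)` is cut into `nᵈ` cells of side `s`; points on
the top faces go to the last layer of cells, hence the clamp at `n - 1`. -/
noncomputable def cellIndex (n : ℕ) [NeZero n] (a : EuclideanSpace ℝ (Fin d)) (s : ℝ)
    (p : EuclideanSpace ℝ (Fin d)) : Fin d → Fin n :=
  fun j => ⟨min ⌊(p j - a j) / s⌋₊ (n - 1),
    (min_le_right _ _).trans_lt (Nat.sub_lt (NeZero.pos n) one_pos)⟩

def cellCorner {n : ℕ} (a : EuclideanSpace ℝ (Fin d)) (s : ℝ) (c : Fin d → Fin n) :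
    EuclideanSpace ℝ (Fin d) :=
  WithLp.toLp 2 fun j => a j + c j * s

theorem mem_cube_cellCorner_cellIndex {n : ℕ} [NeZero n] {a p : EuclideanSpace ℝ (Fin d)}
    {s : ℝ} (hs : 0 < s) (hp : p ∈ cube a (n * s)) :
    p ∈ cube (cellCorner a s (cellIndex n a s p)) s := by
  intro j
  set r := (p j - a j) / s
  have hpr : p j - a j = r * s := (div_mul_cancel₀ _ hs.ne').symm
  have hr : 0 ≤ r ∧ r ≤ n := by
    obtain ⟨h₀, h₁⟩ := hp j
    constructor
    · exact div_nonneg (by linarith) hs.le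
    · rwa [div_le_iff₀ hs, sub_le_iff_le_add']
  have hidx : ((cellIndex n a s p j : ℕ) : ℝ) ≤ r ∧
      r ≤ (cellIndex n a s p j : ℕ) + 1 := by
    simp only [cellIndex]
    rcases le_total ⌊r⌋₊ (n - 1) with hfl | hfl
    · rw [min_eq_left hfl]
      exact ⟨Nat.floor_le hr.1, (Nat.lt_floor_add_one r).le⟩
    · rw [min_eq_right hfl]
      have hn : ((n - 1 : ℕ) : ℝ) + 1 = n := by
        rw [Nat.cast_sub NeZero.one_le, Nat.cast_one, sub_add_cancel]
      exact ⟨(Nat.cast_le.2 hfl).trans (Nat.floor_le hr.1), hn ▸ hr.2⟩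
  simp only [cellCorner, WithLp.ofLp_toLp, Set.mem_Icc]
  constructor <;> nlinarith [hidx.1, hidx.2]

theorem dist_le_of_mem_cube {a p q : EuclideanSpace ℝ (Fin d)} {s : ℝ} (hs : 0 ≤ s)
    (hp : p ∈ cube a s) (hq : q ∈ cube a s) : dist p q ≤ √d * s := by
  simpa using EuclideanSpace.dist_le_sqrt_card_mul (x := p) (y := q) hs fun j =>
    abs_sub_le_iff.2 ⟨by linarith [(hp j).2, (hq j).1], by linarith [(hp j).1, (hq j).2]⟩

theorem dist_center_le_of_mem_cube {a p : EuclideanSpace ℝ (Fin d)} {s : ℝ} (hs : 0 ≤ s)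
    (hp : p ∈ cube a s) : dist p (WithLp.toLp 2 fun j => a j + s / 2) ≤ √d * (s / 2) := by
  simpa using EuclideanSpace.dist_le_sqrt_card_mul (x := p) (by positivity) fun j =>
    abs_sub_le_iff.2 ⟨by linarith [(hp j).2], by linarith [(hp j).1]⟩

theorem SeparatedEuc.mono {δ : ℝ} {S T : Finset (EuclideanSpace ℝ (Fin d))}
    (hsep : SeparatedEuc d δ S) (hTS : T ⊆ S) : SeparatedEuc d δ T :=
  fun x hx y hy => hsep x (hTS hx) y (hTS hy)

theorem SeparatedEuc.card_le {δ M : ℝ} {a : EuclideanSpace ℝ (Fin d)}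
    {S : Finset (EuclideanSpace ℝ (Fin d))} (hsep : SeparatedEuc d δ S) (hδ : 0 < δ)
    (hM : 0 < M) (hS : ↑S ⊆ cube a M) : (#S : ℝ) ≤ (√d * M / δ + 1) ^ d := by
  set n := ⌊√d * M / δ⌋₊ + 1
  set s := M / n
  have hs : 0 < s := by positivity
  have hMs : M = n * s := (mul_div_cancel₀ M (by positivity)).symm
  have hsδ : √d * s < δ := by
    have hn := Nat.lt_floor_add_one (√d * M / δ)
    rw [div_lt_iff₀ hδ] at hn
    rw [← mul_div_assoc, div_lt_iff₀ (by positivity)]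
    push_cast [n] at hn ⊢
    linarith
  have hinj : Set.InjOn (cellIndex n a s) S := by
    intro p hp q hq hpq
    by_contra hne
    have hq_cell := mem_cube_cellCorner_cellIndex hs (hMs ▸ hS hq)
    rw [← hpq] at hq_cell
    have := dist_le_of_mem_cube hs.le (mem_cube_cellCorner_cellIndex hs (hMs ▸ hS hp)) hq_cell
    linarith [hsep p hp q hq hne]
  calc (#S : ℝ) ≤ (n : ℝ) ^ d := by
        exact_mod_cast (card_le_card_of_injOn _ (fun _ _ => mem_coe.2 (mem_univ _)) hinj).trans
          (by simp)
    _ ≤ (√d * M / δ + 1) ^ d := by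
        gcongr
        push_cast [n]
        linarith [Nat.floor_le (by positivity : 0 ≤ √d * M / δ)]

end Cubes

section Grid

variable {d k t : ℕ} [NeZero k] [NeZero t]

theorem exists_approxGrid_of_card_compl_image_lt {ε s : ℝ} {a : EuclideanSpace ℝ (Fin d)}
    {S : Finset (EuclideanSpace ℝ (Fin d))} (hεt : √d ≤ 2 * ε * t) (hs : 0 < s)
    (hS : ↑S ⊆ cube a ((k * t : ℕ) * s))
    (hempty : #(S.image (cellIndex (k * t) a s))ᶜ < t ^ d) :
    ∃ q : (Fin d → Fin k) → EuclideanSpace ℝ (Fin d),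
      Injective q ∧ (∀ i, q i ∈ S) ∧ IsApproxGrid d k ε q := by
  set cell : (Fin d → Fin k) × (Fin d → Fin t) → Fin d → Fin (k * t) :=
    fun iv j => finProdFinEquiv (iv.1 j, iv.2 j)
  have hcell : Injective cell := fun iv iv' h => by
    have hj j := Prod.ext_iff.1 (finProdFinEquiv.injective (congrFun h j))
    exact Prod.ext (funext fun j => (hj j).1) (funext fun j => (hj j).2)
  obtain ⟨v, hv⟩ := exists_forall_mem_of_card_compl_lt hcell (by simpa using hempty)
  choose q hqS hq using fun i => mem_image.1 (hv i)
  have hq_inj : Injective q := fun i i' h =>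
    (Prod.ext_iff.1 (hcell ((hq i).symm.trans (h ▸ hq i')))).1
  refine ⟨q, hq_inj, hqS, WithLp.toLp 2 fun j => a j + v j * s + s / 2, t * s,
    mul_pos (Nat.cast_pos.2 (NeZero.pos t)) hs, fun i => ?_⟩
  have hqi := mem_cube_cellCorner_cellIndex hs (hS (hqS i))
  rw [hq i] at hqi
  have hcenter : (WithLp.toLp 2 fun j => (WithLp.toLp 2 fun j => a j + v j * s + s / 2) j
      + t * s * (i j : ℕ) : EuclideanSpace ℝ (Fin d)) =
      WithLp.toLp 2 fun j => cellCorner a s (cell (i, v)) j + s / 2 := by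
    ext j
    simp only [cellCorner, cell, finProdFinEquiv_apply_val, Nat.cast_add, Nat.cast_mul]
    ring
  calc _ = _ := congrArg (dist (q i)) hcenter
    _ ≤ √d * (s / 2) := dist_center_le_of_mem_cube hs.le hqi
    _ ≤ ε * (t * s) := by nlinarith

theorem exists_approxGrid_or_exists_dense_cell {ε s : ℝ} {a : EuclideanSpace ℝ (Fin d)}
    {S : Finset (EuclideanSpace ℝ (Fin d))} (hεt : √d ≤ 2 * ε * t) (hs : 0 < s)
    (hS : ↑S ⊆ cube a ((k * t : ℕ) * s)) (hS_ne : S.Nonempty) :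
    (∃ q : (Fin d → Fin k) → EuclideanSpace ℝ (Fin d),
      Injective q ∧ (∀ i, q i ∈ S) ∧ IsApproxGrid d k ε q) ∨
    ∃ c, (1 + 1 / (2 * (k : ℝ) ^ d)) * #S ≤
      ((k * t : ℕ) : ℝ) ^ d * #{p ∈ S | cellIndex (k * t) a s p = c} := by
  have hcard : Fintype.card (Fin d → Fin (k * t)) = ((k * t : ℕ) : ℝ) ^ d := by simp
  refine or_iff_not_imp_right.2 fun hdense => ?_
  push Not at hdense
  rw [← hcard] at hdense
  have hempty := card_compl_image_lt hS_ne (cellIndex (k * t) a s) (by positivity) hdense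
  have hηN : 1 / (2 * (k : ℝ) ^ d) * ((k * t : ℕ) : ℝ) ^ d = (t : ℝ) ^ d / 2 := by
    have hk : (k : ℝ) ≠ 0 := Nat.cast_ne_zero.2 (NeZero.ne k)
    push_cast
    field_simp
    ring
  rw [hcard, hηN] at hempty
  exact exists_approxGrid_of_card_compl_image_lt hεt hs hS
    (by exact_mod_cast hempty.trans (half_lt_self (pow_pos (Nat.cast_pos.2 (NeZero.pos t)) d)))

theorem exists_approxGrid_of_card_mul_pow_gt {δ ε : ℝ} (hδ : 0 < δ)
    (hεt : √d ≤ 2 * ε * t) (J : ℕ) {M : ℝ} {a : EuclideanSpace ℝ (Fin d)}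
    {S : Finset (EuclideanSpace ℝ (Fin d))} (hM : δ * ((k * t : ℕ) : ℝ) ^ J ≤ M)
    (hS : ↑S ⊆ cube a M) (hsep : SeparatedEuc d δ S)
    (hcard : ((√d + 1) * M / δ) ^ d < #S * (1 + 1 / (2 * (k : ℝ) ^ d)) ^ J) :
    ∃ q : (Fin d → Fin k) → EuclideanSpace ℝ (Fin d),
      Injective q ∧ (∀ i, q i ∈ S) ∧ IsApproxGrid d k ε q := by
  induction J generalizing M a S with
  | zero =>
    rw [pow_zero, mul_one] at hM hcard
    have hM₀ : 0 < M := hδ.trans_le hM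
    have hside : √d * M / δ + 1 ≤ (√d + 1) * M / δ := by
      rwa [add_mul, add_div, one_mul, add_le_add_iff_left, le_div_iff₀ hδ, one_mul]
    exact absurd hcard ((hsep.card_le hδ hM₀ hS).trans (by gcongr)).not_gt
  | succ J ih =>
    set n := k * t
    set η : ℝ := 1 / (2 * (k : ℝ) ^ d)
    set s := M / n
    have hn : (0 : ℝ) < n := Nat.cast_pos.2 (NeZero.pos n)
    have hM₀ : 0 < M := (mul_pos hδ (pow_pos hn _)).trans_le hM
    have hs : 0 < s := div_pos hM₀ hn
    have hMs : M = n * s := (mul_div_cancel₀ M hn.ne').symm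
    have hS_ne : S.Nonempty := by
      rw [← card_pos, ← Nat.cast_pos (α := ℝ)]
      exact pos_of_mul_pos_left ((by positivity : (0 : ℝ) ≤ _).trans_lt hcard) (by positivity)
    obtain hgrid | ⟨c, hc⟩ := exists_approxGrid_or_exists_dense_cell hεt hs (hMs ▸ hS) hS_ne
    · exact hgrid
    set F := {p ∈ S | cellIndex n a s p = c}
    have hs_ge : δ * (n : ℝ) ^ J ≤ s := by rwa [le_div_iff₀ hn, mul_assoc, ← pow_succ]
    have hF : ↑F ⊆ cube (cellCorner a s c) s := by
      intro p hp
      obtain ⟨hpS, rfl⟩ := mem_filter.1 hp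
      exact mem_cube_cellCorner_cellIndex hs (hMs ▸ hS hpS)
    have hF_card : ((√d + 1) * s / δ) ^ d < #F * (1 + η) ^ J := calc
      ((√d + 1) * s / δ) ^ d = ((√d + 1) * M / δ) ^ d / (n : ℝ) ^ d := by
        rw [hMs, ← div_pow]
        field_simp
      _ < #S * (1 + η) ^ (J + 1) / (n : ℝ) ^ d := by gcongr
      _ = (1 + η) * #S / (n : ℝ) ^ d * (1 + η) ^ J := by ring
      _ ≤ #F * (1 + η) ^ J := by
        gcongr
        rw [div_le_iff₀ (by positivity)]
        linarith
    obtain ⟨q, hq_inj, hqF, hq⟩ := ih hs_ge hF (hsep.mono (filter_subset _ _)) hF_card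
    exact ⟨q, hq_inj, fun i => (mem_filter.1 (hqF i)).1, hq⟩

end Grid

theorem approx_grid_of_dense_separated_general (d k : ℕ) (hk : 0 < k)
    (c δ ε : ℝ) (hc : 0 < c) (hδ : 0 < δ) (hε : 0 < ε) :
    ∃ Z₀ : ℝ, 0 < Z₀ ∧
      ∀ L : ℝ, Z₀ ≤ L → ∀ S : Finset (EuclideanSpace ℝ (Fin d)),
        (∀ p ∈ S, ∀ j : Fin d, p j ∈ Set.Icc (0 : ℝ) L) →
        SeparatedEuc d δ S → c * L ^ d ≤ S.card →
        ∃ q : (Fin d → Fin k) → EuclideanSpace ℝ (Fin d),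
          Function.Injective q ∧ (∀ i, q i ∈ S) ∧ IsApproxGrid d k ε q := by
  obtain ⟨t, ht⟩ := exists_nat_gt (√d / (2 * ε))
  have ht₀ : 0 < t := Nat.cast_pos.1 ((by positivity : 0 ≤ √d / (2 * ε)).trans_lt ht)
  have : NeZero k := ⟨hk.ne'⟩
  have : NeZero t := ⟨ht₀.ne'⟩
  have hεt : √d ≤ 2 * ε * t := by rw [div_lt_iff₀ (by positivity)] at ht; linarith
  obtain ⟨J, hJ⟩ := pow_unbounded_of_one_lt (((√d + 1) / δ) ^ d / c)
    (lt_add_of_pos_right 1 (by positivity : (0 : ℝ) < 1 / (2 * (k : ℝ) ^ d)))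
  refine ⟨δ * ((k * t : ℕ) : ℝ) ^ J, by positivity, fun L hL S hS hsep hcard => ?_⟩
  refine exists_approxGrid_of_card_mul_pow_gt hδ hεt J hL (a := 0)
    (fun p hp j => by simpa using hS p hp j) hsep ?_
  have hL₀ : 0 < L := (by positivity : 0 < δ * ((k * t : ℕ) : ℝ) ^ J).trans_le hL
  calc ((√d + 1) * L / δ) ^ d = ((√d + 1) / δ) ^ d * L ^ d := by
        rw [← mul_pow, div_mul_eq_mul_div]
    _ = ((√d + 1) / δ) ^ d / c * (c * L ^ d) := by field_simp
    _ < (1 + 1 / (2 * (k : ℝ) ^ d)) ^ J * (c * L ^ d) :=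
        mul_lt_mul_of_pos_right hJ (by positivity)
    _ ≤ #S * (1 + 1 / (2 * (k : ℝ) ^ d)) ^ J := by rw [mul_comm]; gcongr

theorem approx_grid_of_dense_separated (d k : ℕ) (hd : 0 < d) (hk : 0 < k)
    (c δ ε : ℝ) (hc : 0 < c) (hδ : 0 < δ) (hε : 0 < ε) (hε' : ε ≤ 1 / 3) :
    ∃ Z₀ : ℝ, 0 < Z₀ ∧
      ∀ L : ℝ, Z₀ ≤ L → ∀ S : Finset (EuclideanSpace ℝ (Fin d)),
        (∀ p ∈ S, ∀ j : Fin d, p j ∈ Set.Icc (0 : ℝ) L) →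
        SeparatedEuc d δ S → c * L ^ d ≤ S.card →
        ∃ q : (Fin d → Fin k) → EuclideanSpace ℝ (Fin d),
          Function.Injective q ∧ (∀ i, q i ∈ S) ∧ IsApproxGrid d k ε q :=
  approx_grid_of_dense_separated_general d k hk c δ ε hc hδ hε
end

section
/- For every dimension d, positive integer k, and ε > 0, there exists N = N(d, k, ε) such that every set of at least N points in ℝ^d contains a subset of k points that is ε-collinear (every triangle determined by the subset has at least two interior angles of measure at most ε). -/
/-!
Cover the unit sphere by finitely many balls of radius `ε / π` and colour an ordered pair of
points `(x, y)` by a ball containing the direction of `y - x`; two directions in the same ball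
make an angle at most `ε`. With `c` colours, among `(c + 1) ^ m` points one finds `x₁, …, xₘ`
such that the colour of `(xᵢ, xⱼ)`, `i < j`, depends only on `i` (pick `x₁`, keep the largest
colour class of the directions seen from it, recurse), and pigeonholing these `m` colours leaves
`k` points all of whose pairs `xᵢ → xⱼ`, `i < j`, have one colour. For `i < j < l` the angles of
the triangle at `xᵢ` and at `xₗ` are then angles between two directions of that colour.
-/

open EuclideanGeometry

/-- A finite set in `ℝ^d` is ε-collinear if every triangle determined by three
distinct points of it has at least two interior angles of measure at most ε. -/
def EpsCollinear (d : ℕ) (ε : ℝ) (K : Finset (EuclideanSpace ℝ (Fin d))) : Prop :=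
  ∀ p ∈ K, ∀ q ∈ K, ∀ r ∈ K, p ≠ q → p ≠ r → q ≠ r →
    (∠ q p r ≤ ε ∧ ∠ p q r ≤ ε) ∨ (∠ q p r ≤ ε ∧ ∠ p r q ≤ ε) ∨
    (∠ p q r ≤ ε ∧ ∠ p r q ≤ ε)

open Real NormedSpace

section Coloring

variable {α β : Type*} [Fintype β] (f : α → α → β)

theorem exists_prehomogeneous_list (m : ℕ) (S : Finset α)
    (hS : (Fintype.card β + 1) ^ m ≤ S.card) :
    ∃ L : List (α × β), L.length = m ∧ (∀ p ∈ L, p.1 ∈ S) ∧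
      L.Pairwise (fun p q => p.1 ≠ q.1 ∧ f p.1 q.1 = p.2) := by
  classical
  induction m generalizing S with
  | zero => exact ⟨[], rfl, by simp, List.Pairwise.nil⟩
  | succ m ih =>
    obtain ⟨a, ha⟩ : S.Nonempty := Finset.card_pos.mp (lt_of_lt_of_le (by positivity) hS)
    have : Nonempty β := ⟨f a a⟩
    have hcard : (Finset.univ : Finset β).card * (Fintype.card β + 1) ^ m ≤ (S.erase a).card := by
      have : 0 < (Fintype.card β + 1) ^ m := by positivity
      rw [Finset.card_univ, Finset.card_erase_of_mem ha, mul_comm]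
      rw [pow_succ, mul_add_one] at hS
      omega
    obtain ⟨b, -, hb⟩ := Finset.exists_le_card_fiber_of_mul_le_card_of_maps_to
      (fun x _ => Finset.mem_univ (f a x)) Finset.univ_nonempty hcard
    obtain ⟨L, hlen, hmem, hpair⟩ := ih _ hb
    have hmem' : ∀ p ∈ L, p.1 ∈ S.erase a ∧ f a p.1 = b := fun p hp =>
      Finset.mem_filter.mp (hmem p hp)
    refine ⟨(a, b) :: L, by simp [hlen], ?_, List.pairwise_cons.mpr ⟨fun q hq => ?_, hpair⟩⟩
    · simp only [List.mem_cons]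
      rintro p (rfl | hp)
      exacts [ha, Finset.mem_of_mem_erase (hmem' p hp).1]
    · exact ⟨(Finset.ne_of_mem_erase (hmem' q hq).1).symm, (hmem' q hq).2⟩

theorem exists_fin_monochromatic (k : ℕ) (S : Finset α)
    (hS : (Fintype.card β + 1) ^ (Fintype.card β * k + 1) ≤ S.card) :
    ∃ b : β, ∃ g : Fin k → α, (∀ i, g i ∈ S) ∧ ∀ i j, i < j → g i ≠ g j ∧ f (g i) (g j) = b := by
  classical
  obtain ⟨L, hlen, hmem, hpair⟩ := exists_prehomogeneous_list f _ S hS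
  have hcard : (Finset.univ : Finset β).card * k < (Finset.univ : Finset (Fin L.length)).card := by
    simp [hlen]
  obtain ⟨b, -, hb⟩ := Finset.exists_lt_card_fiber_of_mul_lt_card_of_maps_to
    (fun (i : Fin L.length) _ => Finset.mem_univ (L.get i).2) hcard
  obtain ⟨J, hJ, hJcard⟩ := Finset.exists_subset_card_eq hb.le
  let e := J.orderEmbOfFin hJcard
  refine ⟨b, fun i => (L.get (e i)).1, fun i => hmem _ (List.get_mem L _), fun i j hij => ?_⟩
  obtain ⟨hne, hcol⟩ := List.pairwise_iff_get.mp hpair (e i) (e j) (e.strictMono hij)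
  exact ⟨hne, hcol.trans (Finset.mem_filter.mp (hJ (J.orderEmbOfFin_mem hJcard i))).2⟩

end Coloring

theorem forall_of_forall_lt_of_swap {ι : Type*} [LinearOrder ι] {P : ι → ι → ι → Prop}
    (swap_left : ∀ {i j l}, P i j l → P j i l) (swap_right : ∀ {i j l}, P i j l → P i l j)
    (h : ∀ {i j l}, i < j → j < l → P i j l) {i j l : ι} (hij : i ≠ j) (hil : i ≠ l)
    (hjl : j ≠ l) : P i j l := by
  rcases hij.lt_or_gt with hij | hji <;> rcases hil.lt_or_gt with hil | hli <;>
    rcases hjl.lt_or_gt with hjl | hlj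
  · exact h hij hjl
  · exact swap_right (h hil hlj)
  · exact absurd (hli.trans hij) hjl.not_gt
  · exact swap_right (swap_left (h hli hij))
  · exact swap_left (h hji hil)
  · exact absurd (hlj.trans hji) hil.not_gt
  · exact swap_left (swap_right (h hjl hli))
  · exact swap_left (swap_right (swap_left (h hlj hji)))

section Geometry

variable {V : Type*} [NormedAddCommGroup V] [InnerProductSpace ℝ V]

theorem angle_le_pi_div_two_mul_norm_sub {u v : V} (hu : ‖u‖ = 1) (hv : ‖v‖ = 1) :
    InnerProductGeometry.angle u v ≤ π / 2 * ‖u - v‖ := by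
  set θ := InnerProductGeometry.angle u v
  have hθ : 0 ≤ θ := InnerProductGeometry.angle_nonneg u v
  have hcos : cos θ = inner ℝ u v :=
    (InnerProductGeometry.inner_eq_cos_angle_of_norm_eq_one hu hv).symm
  have hcos_le : cos θ ≤ 1 - 2 / π ^ 2 * θ ^ 2 := cos_le_one_sub_mul_cos_sq
    (by rw [abs_of_nonneg hθ]; exact InnerProductGeometry.angle_le_pi u v)
  have hnorm : ‖u - v‖ ^ 2 = 2 - 2 * inner ℝ u v := by
    rw [norm_sub_sq_real, hu, hv]; ring
  have hsq : θ ^ 2 ≤ (π / 2 * ‖u - v‖) ^ 2 := by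
    have hπ : 0 < π ^ 2 := by positivity
    have : 2 / π ^ 2 * θ ^ 2 ≤ ‖u - v‖ ^ 2 / 2 := by linarith
    rw [div_mul_eq_mul_div, div_le_iff₀ hπ] at this
    nlinarith
  exact le_of_sq_le_sq hsq (by positivity)

theorem exists_fin_coloring_angle_le [ProperSpace V] {ε : ℝ} (hε : 0 < ε) :
    ∃ n : ℕ, ∃ c : V → Fin n,
      ∀ u v, u ≠ 0 → v ≠ 0 → c u = c v → InnerProductGeometry.angle u v ≤ ε := by
  classical
  obtain ⟨t, -, ht, hcover⟩ := (isCompact_sphere (0 : V) 1).finite_cover_balls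
    (div_pos hε pi_pos)
  -- the extra colour `0` is only there to make the colouring total
  let T := insert 0 ht.toFinset
  have hcentre : ∀ u : V, ∃ x ∈ T, u ≠ 0 → dist (normalize u) x < ε / π := by
    intro u
    by_cases hu : u = 0
    · exact ⟨0, Finset.mem_insert_self _ _, fun h => (h hu).elim⟩
    have hmem : normalize u ∈ Metric.sphere (0 : V) 1 := by
      rw [mem_sphere_zero_iff_norm]; exact norm_normalize_eq_one_iff.mpr hu
    obtain ⟨x, hx, hball⟩ := Set.mem_iUnion₂.mp (hcover hmem)
    exact ⟨x, Finset.mem_insert_of_mem (ht.mem_toFinset.mpr hx), fun _ => hball⟩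
  choose c hcT hc using hcentre
  refine ⟨T.card, fun u => T.equivFin ⟨c u, hcT u⟩, fun u v hu hv huv => ?_⟩
  have hcuv : c u = c v := congrArg Subtype.val (T.equivFin.injective huv)
  rw [← InnerProductGeometry.angle_normalize_left,
    ← InnerProductGeometry.angle_normalize_right]
  calc InnerProductGeometry.angle (normalize u) (normalize v)
      ≤ π / 2 * ‖normalize u - normalize v‖ := angle_le_pi_div_two_mul_norm_sub
        (norm_normalize_eq_one_iff.mpr hu) (norm_normalize_eq_one_iff.mpr hv)
    _ ≤ π / 2 * (dist (normalize u) (c u) + dist (normalize v) (c v)) := by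
        rw [← dist_eq_norm, hcuv]
        gcongr
        exact dist_triangle_right _ _ _
    _ ≤ π / 2 * (ε / π + ε / π) := by gcongr <;> exact (hc _ ‹_›).le
    _ = ε := by field_simp; ring

def HasTwoAnglesLE (ε : ℝ) (p q r : V) : Prop :=
  (∠ q p r ≤ ε ∧ ∠ p q r ≤ ε) ∨ (∠ q p r ≤ ε ∧ ∠ p r q ≤ ε) ∨ (∠ p q r ≤ ε ∧ ∠ p r q ≤ ε)

variable {ε : ℝ} {p q r : V}

theorem HasTwoAnglesLE.swap_left (h : HasTwoAnglesLE ε p q r) : HasTwoAnglesLE ε q p r := by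
  unfold HasTwoAnglesLE at *
  rw [angle_comm q r p]
  tauto

theorem HasTwoAnglesLE.swap_right (h : HasTwoAnglesLE ε p q r) : HasTwoAnglesLE ε p r q := by
  unfold HasTwoAnglesLE at *
  rw [angle_comm r p q]
  tauto

theorem HasTwoAnglesLE.of_angle_sub_le
    (hp : InnerProductGeometry.angle (q - p) (r - p) ≤ ε)
    (hr : InnerProductGeometry.angle (r - p) (r - q) ≤ ε) : HasTwoAnglesLE ε p q r := by
  have hr' : ∠ p r q = InnerProductGeometry.angle (r - p) (r - q) := by
    rw [← InnerProductGeometry.angle_neg_neg, neg_sub, neg_sub]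
    rfl
  exact Or.inr (Or.inl ⟨hp, hr' ▸ hr⟩)

end Geometry

theorem exists_eps_collinear_subset_general (d k : ℕ) (ε : ℝ) (hε : 0 < ε) :
    ∃ N : ℕ, ∀ S : Finset (EuclideanSpace ℝ (Fin d)), N ≤ S.card →
      ∃ K ⊆ S, K.card = k ∧ EpsCollinear d ε K := by
  classical
  obtain ⟨n, c, hc⟩ := exists_fin_coloring_angle_le (V := EuclideanSpace ℝ (Fin d)) hε
  refine ⟨(n + 1) ^ (n * k + 1), fun S hS => ?_⟩
  obtain ⟨b, g, hgS, hg⟩ :=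
    exists_fin_monochromatic (fun x y => c (y - x)) k S (by simpa using hS)
  have hg_inj : Function.Injective g := .of_lt_imp_ne fun i j hij => (hg i j hij).1
  have hsub_ne : ∀ i j, i < j → g j - g i ≠ 0 := fun i j hij =>
    sub_ne_zero.mpr (hg i j hij).1.symm
  refine ⟨Finset.univ.image g, Finset.image_subset_iff.mpr fun i _ => hgS i,
    by rw [Finset.card_image_of_injective _ hg_inj, Finset.card_fin], ?_⟩
  simp only [EpsCollinear, Finset.mem_image, Finset.mem_univ, true_and]
  rintro _ ⟨i, rfl⟩ _ ⟨j, rfl⟩ _ ⟨l, rfl⟩ hij hil hjl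
  refine forall_of_forall_lt_of_swap (P := fun i j l => HasTwoAnglesLE ε (g i) (g j) (g l))
    (fun h => h.swap_left) (fun h => h.swap_right) (fun {i j l} hij hjl => ?_)
    (ne_of_apply_ne g hij) (ne_of_apply_ne g hil) (ne_of_apply_ne g hjl)
  have hil := hij.trans hjl
  refine .of_angle_sub_le (hc _ _ (hsub_ne i j hij) (hsub_ne i l hil) ?_)
    (hc _ _ (hsub_ne i l hil) (hsub_ne j l hjl) ?_)
  · exact (hg i j hij).2.trans (hg i l hil).2.symm
  · exact (hg i l hil).2.trans (hg j l hjl).2.symm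

theorem exists_eps_collinear_subset (d k : ℕ) (hd : 0 < d) (hk : 0 < k)
    (ε : ℝ) (hε : 0 < ε) :
    ∃ N : ℕ, ∀ S : Finset (EuclideanSpace ℝ (Fin d)), N ≤ S.card →
      ∃ K ⊆ S, K.card = k ∧ EpsCollinear d ε K :=
  exists_eps_collinear_subset_general d k ε hε
end

section
/- In the plane, suppose all points of a finite set K have distinct x-coordinates and there is an interval J of length ε such that for every pair p, q ∈ K with x(p) < x(q), the angle that segment pq makes with the x-axis lies in J. Then K is ε-collinear: in every triangle determined by K, the angles at the leftmost and rightmost vertices are each at most ε. -/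
/-! For a vector `v` of the open right half-plane, `arctan (v 1 / v 0)` is its polar angle, so
the unoriented angle between two such vectors is the distance between their polar angles.
At the leftmost vertex `p` of a triangle `pqr` both sides point into the right half-plane, and
at the rightmost vertex `r` their negatives do; either way the angle is the distance between
two slope angles of the set, hence at most the length `ε` of the interval containing them. -/

open Real EuclideanGeometry

lemma norm_eq_mul_sqrt_one_add_div_sq (v : EuclideanSpace ℝ (Fin 2)) (hv : 0 < v 0) :
    ‖v‖ = v 0 * √(1 + (v 1 / v 0) ^ 2) := by
  rw [EuclideanSpace.norm_eq, Fin.sum_univ_two, ← sqrt_sq hv.le, ← sqrt_mul (sq_nonneg _),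
    sqrt_sq hv.le]
  congr 1
  simp only [Real.norm_eq_abs, sq_abs]
  field_simp

lemma norm_mul_cos_arctan_div (v : EuclideanSpace ℝ (Fin 2)) (hv : 0 < v 0) :
    ‖v‖ * cos (arctan (v 1 / v 0)) = v 0 := by
  have : 0 < √(1 + (v 1 / v 0) ^ 2) := by positivity
  rw [norm_eq_mul_sqrt_one_add_div_sq v hv, cos_arctan]
  field_simp

lemma norm_mul_sin_arctan_div (v : EuclideanSpace ℝ (Fin 2)) (hv : 0 < v 0) :
    ‖v‖ * sin (arctan (v 1 / v 0)) = v 1 := by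
  have : 0 < √(1 + (v 1 / v 0) ^ 2) := by positivity
  rw [norm_eq_mul_sqrt_one_add_div_sq v hv, sin_arctan]
  field_simp

lemma angle_eq_dist_arctan_div (v w : EuclideanSpace ℝ (Fin 2)) (hv : 0 < v 0) (hw : 0 < w 0) :
    InnerProductGeometry.angle v w = dist (arctan (v 1 / v 0)) (arctan (w 1 / w 0)) := by
  set α := arctan (v 1 / v 0)
  set β := arctan (w 1 / w 0)
  have hvw : ‖v‖ * ‖w‖ ≠ 0 := by
    have : v ≠ 0 := fun h => by simp [h] at hv
    have : w ≠ 0 := fun h => by simp [h] at hw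
    positivity
  have hinner : inner ℝ v w = ‖v‖ * ‖w‖ * cos (α - β) :=
    calc inner ℝ v w
        = v 0 * w 0 + v 1 * w 1 := by simp [PiLp.inner_apply, Fin.sum_univ_two, mul_comm]
      _ = (‖v‖ * cos α) * (‖w‖ * cos β) + (‖v‖ * sin α) * (‖w‖ * sin β) := by
          rw [norm_mul_cos_arctan_div v hv, norm_mul_sin_arctan_div v hv,
            norm_mul_cos_arctan_div w hw, norm_mul_sin_arctan_div w hw]
      _ = ‖v‖ * ‖w‖ * cos (α - β) := by rw [cos_sub]; ring
  have hαβ : |α - β| ≤ π := by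
    obtain ⟨hα₁, hα₂⟩ := arctan_mem_Ioo (v 1 / v 0)
    obtain ⟨hβ₁, hβ₂⟩ := arctan_mem_Ioo (w 1 / w 0)
    rw [abs_sub_le_iff]
    constructor <;> linarith
  rw [InnerProductGeometry.angle, hinner, mul_div_cancel_left₀ _ hvw, dist_eq, ← cos_abs]
  exact arccos_cos (abs_nonneg _) hαβ

lemma angle_eq_dist_arctan_slope_of_lt (x y z : EuclideanSpace ℝ (Fin 2)) (hy : x 0 < y 0)
    (hz : x 0 < z 0) :
    ∠ y x z = dist (arctan ((y 1 - x 1) / (y 0 - x 0))) (arctan ((z 1 - x 1) / (z 0 - x 0))) :=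
  angle_eq_dist_arctan_div (y - x) (z - x) (sub_pos.2 hy) (sub_pos.2 hz)

lemma angle_eq_dist_arctan_slope_of_gt (x y z : EuclideanSpace ℝ (Fin 2)) (hy : y 0 < x 0)
    (hz : z 0 < x 0) :
    ∠ y x z = dist (arctan ((x 1 - y 1) / (x 0 - y 0))) (arctan ((x 1 - z 1) / (x 0 - z 0))) := by
  rw [EuclideanGeometry.angle, ← InnerProductGeometry.angle_neg_neg, vsub_eq_sub, vsub_eq_sub,
    neg_sub, neg_sub]
  exact angle_eq_dist_arctan_div (x - y) (x - z) (sub_pos.2 hy) (sub_pos.2 hz)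

theorem angles_small_of_slopes_in_interval_general (ε : ℝ)
    (K : Finset (EuclideanSpace ℝ (Fin 2)))
    (θ₀ : ℝ)
    (hslope : ∀ p ∈ K, ∀ q ∈ K, p 0 < q 0 →
      Real.arctan ((q 1 - p 1) / (q 0 - p 0)) ∈ Set.Icc θ₀ (θ₀ + ε)) :
    ∀ p ∈ K, ∀ q ∈ K, ∀ r ∈ K, p 0 < q 0 → q 0 < r 0 →
      ∠ q p r ≤ ε ∧ ∠ q r p ≤ ε := by
  intro p hp q hq r hr hpq hqr
  have hpr : p 0 < r 0 := hpq.trans hqr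
  have hdist : ∀ {s t : ℝ}, s ∈ Set.Icc θ₀ (θ₀ + ε) → t ∈ Set.Icc θ₀ (θ₀ + ε) → dist s t ≤ ε :=
    fun hs ht => (Real.dist_le_of_mem_Icc hs ht).trans_eq (add_sub_cancel_left θ₀ ε)
  constructor
  · rw [angle_eq_dist_arctan_slope_of_lt p q r hpq hpr]
    exact hdist (hslope p hp q hq hpq) (hslope p hp r hr hpr)
  · rw [angle_eq_dist_arctan_slope_of_gt r q p hqr hpr]
    exact hdist (hslope q hq r hr hqr) (hslope p hp r hr hpr)

theorem angles_small_of_slopes_in_interval (ε : ℝ) (hε : 0 < ε)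
    (K : Finset (EuclideanSpace ℝ (Fin 2)))
    (hx : ∀ p ∈ K, ∀ q ∈ K, p ≠ q → p 0 ≠ q 0)
    (θ₀ : ℝ)
    (hslope : ∀ p ∈ K, ∀ q ∈ K, p 0 < q 0 →
      Real.arctan ((q 1 - p 1) / (q 0 - p 0)) ∈ Set.Icc θ₀ (θ₀ + ε)) :
    ∀ p ∈ K, ∀ q ∈ K, ∀ r ∈ K, p 0 < q 0 → q 0 < r 0 →
      ∠ q p r ≤ ε ∧ ∠ q r p ≤ ε :=
  angles_small_of_slopes_in_interval_general ε K θ₀ hslope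
end

section
/- If S ⊆ ℝ^d is ε-collinear with 0 < ε < 1 and has diameter D, then every point of S lies within distance εD of the line through a diametral pair of S (a pair of points of S realizing the diameter D). -/
open EuclideanGeometry

open InnerProductGeometry
open scoped RealInnerProductSpace

/-!
If `x, y` is a diametral pair and `z` another point, ε-collinearity of the triangle `x y z`
forces its angle at `x` or at `y`, say at `a` with `b` the other endpoint, to be at most `ε`.
The distance from `z` to the line `xy` is at most `dist a z * sin (∠ b a z) ≤ D * ε`, since
`sin θ ≤ θ` and the diameter bounds `dist a z`.
-/

section Geometry

variable {V P : Type*} [NormedAddCommGroup V] [InnerProductSpace ℝ V] [MetricSpace P]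
  [NormedAddTorsor V P]

theorem norm_sub_starProjection_span_singleton (v u : V) :
    ‖v - (ℝ ∙ u).starProjection v‖ = ‖v‖ * Real.sin (angle v u) := by
  rcases eq_or_ne u 0 with rfl | hu
  · simp [angle_zero_right]
  have hu' : ‖u‖ ≠ 0 := norm_ne_zero_iff.2 hu
  rw [Submodule.starProjection_singleton, RCLike.ofReal_real_eq_id, id, real_inner_comm]
  set w := v - (⟪v, u⟫ / ‖u‖ ^ 2) • u
  have hw : (‖w‖ * ‖u‖) ^ 2 = ⟪v, v⟫ * ⟪u, u⟫ - ⟪v, u⟫ * ⟪v, u⟫ := by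
    rw [mul_pow, norm_sub_sq_real, real_inner_smul_right, norm_smul, Real.norm_eq_abs, mul_pow,
      sq_abs, real_inner_self_eq_norm_sq, real_inner_self_eq_norm_sq]
    field_simp
    ring
  apply mul_right_cancel₀ hu'
  calc ‖w‖ * ‖u‖ = √((‖w‖ * ‖u‖) ^ 2) := (Real.sqrt_sq (by positivity)).symm
    _ = Real.sin (angle v u) * (‖v‖ * ‖u‖) := by rw [hw, sin_angle_mul_norm_mul_norm]
    _ = ‖v‖ * Real.sin (angle v u) * ‖u‖ := by ring

theorem infDist_affineSpan_pair_le_dist_mul_sin_angle (a b z : P) :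
    Metric.infDist z (line[ℝ, a, b] : Set P) ≤ dist a z * Real.sin (∠ b a z) := by
  set w := (ℝ ∙ (b -ᵥ a)).starProjection (z -ᵥ a)
  have hw : w +ᵥ a ∈ line[ℝ, a, b] := by
    refine AffineSubspace.vadd_mem_of_mem_direction ?_ (left_mem_affineSpan_pair ℝ a b)
    rw [direction_affineSpan, vectorSpan_pair_rev]
    exact Submodule.starProjection_apply_mem _ _
  calc Metric.infDist z (line[ℝ, a, b] : Set P) ≤ dist z (w +ᵥ a) :=
        Metric.infDist_le_dist_of_mem hw
    _ = ‖z -ᵥ a - w‖ := by rw [dist_eq_norm_vsub V, vsub_vadd_eq_vsub_sub]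
    _ = dist a z * Real.sin (∠ b a z) := by
        rw [norm_sub_starProjection_span_singleton, dist_comm, dist_eq_norm_vsub V,
          EuclideanGeometry.angle_comm]
        rfl

theorem infDist_affineSpan_pair_le_of_angle_le {a b z : P} {ε D : ℝ} (hangle : ∠ b a z ≤ ε)
    (hdist : dist a z ≤ D) : Metric.infDist z (line[ℝ, a, b] : Set P) ≤ ε * D := by
  have hsin : Real.sin (∠ b a z) ≤ ε := (Real.sin_le (angle_nonneg _ _ _)).trans hangle
  calc Metric.infDist z (line[ℝ, a, b] : Set P) ≤ dist a z * Real.sin (∠ b a z) :=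
        infDist_affineSpan_pair_le_dist_mul_sin_angle a b z
    _ ≤ D * ε := mul_le_mul hdist hsin (sin_angle_nonneg _ _) (dist_nonneg.trans hdist)
    _ = ε * D := mul_comm D ε

end Geometry

theorem EpsCollinear.angle_le_or_angle_le {d : ℕ} {ε : ℝ}
    {S : Finset (EuclideanSpace ℝ (Fin d))} (hcol : EpsCollinear d ε S)
    {p q r : EuclideanSpace ℝ (Fin d)}
    (hp : p ∈ S) (hq : q ∈ S) (hr : r ∈ S) (hpq : p ≠ q) (hpr : p ≠ r) (hqr : q ≠ r) :
    ∠ q p r ≤ ε ∨ ∠ p q r ≤ ε := by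
  rcases hcol p hp q hq r hr hpq hpr hqr with ⟨h, _⟩ | ⟨h, _⟩ | ⟨h, _⟩
  · exact .inl h
  · exact .inl h
  · exact .inr h

theorem eps_collinear_near_diametral_line_general (d : ℕ) (ε D : ℝ)
    (hε0 : 0 < ε)
    (S : Finset (EuclideanSpace ℝ (Fin d))) (hcol : EpsCollinear d ε S)
    (x y : EuclideanSpace ℝ (Fin d)) (hx : x ∈ S) (hy : y ∈ S)
    (hxy : dist x y = D) (hdiam : ∀ p ∈ S, ∀ q ∈ S, dist p q ≤ D) :
    ∀ z ∈ S, Metric.infDist z (affineSpan ℝ ({x, y} : Set (EuclideanSpace ℝ (Fin d))) : Set (EuclideanSpace ℝ (Fin d))) ≤ ε * D := by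
  intro z hz
  by_cases hz_xy : z = x ∨ z = y
  · have hz_line : z ∈ line[ℝ, x, y] := by
      rcases hz_xy with rfl | rfl
      exacts [left_mem_affineSpan_pair ℝ _ _, right_mem_affineSpan_pair ℝ _ _]
    rw [Metric.infDist_zero_of_mem hz_line]
    exact mul_nonneg hε0.le (hxy ▸ dist_nonneg)
  obtain ⟨hzx, hzy⟩ := not_or.1 hz_xy
  have hx_ne_y : x ≠ y := by
    rintro rfl
    rw [dist_self] at hxy
    exact hzx (dist_le_zero.1 (hxy ▸ hdiam z hz x hx))
  rcases hcol.angle_le_or_angle_le hx hy hz hx_ne_y (Ne.symm hzx) (Ne.symm hzy) with h | h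
  · exact infDist_affineSpan_pair_le_of_angle_le h (hdiam x hx z hz)
  · rw [Set.pair_comm]
    exact infDist_affineSpan_pair_le_of_angle_le h (hdiam y hy z hz)

theorem eps_collinear_near_diametral_line (d : ℕ) (hd : 0 < d) (ε D : ℝ)
    (hε0 : 0 < ε) (hε1 : ε < 1)
    (S : Finset (EuclideanSpace ℝ (Fin d))) (hcol : EpsCollinear d ε S)
    (x y : EuclideanSpace ℝ (Fin d)) (hx : x ∈ S) (hy : y ∈ S)
    (hxy : dist x y = D) (hdiam : ∀ p ∈ S, ∀ q ∈ S, dist p q ≤ D) :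
    ∀ z ∈ S, Metric.infDist z (affineSpan ℝ ({x, y} : Set (EuclideanSpace ℝ (Fin d))) : Set (EuclideanSpace ℝ (Fin d))) ≤ ε * D :=
  eps_collinear_near_diametral_line_general d ε D hε0 S hcol x y hx hy hxy hdiam
end
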